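/- arXiv:2303.12558 — 2 statements merged into one kernel-verified Lean document; each statement's English description precedes it below -/
import Mathlib

section
/- Let (X, d) be a complete separable (Polish) metric space, Z a standard Borel space, G : Z → X a Borel measurable map, P a probability measure on X, and ν a probability measure on Z. Then the Wasserstein distance between P and the pushforward measure G_*ν satisfies W_d(P, G_*ν) = inf over all Markov kernels q from X to Z whose P-mixture equals ν (i.e., ∫_X q(·|x) dP(x) = ν) of ∫_X ∫_Z d(x, G(z)) q(dz|x) P(dx), where both sides are taken in [0, ∞]. -/
/-!
An encoder `q` turns `P` into the coupling `P ⊗ q` of `P` and `ν`, and pushing it forward by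
`id × G` gives a coupling of `P` and `G_*ν` with the same cost. Conversely, a coupling `γ` of `P`
and `G_*ν` lifts to a coupling of `P` and `ν`: glue `γ` to the disintegration of `ν` along `G`
(the law of `z` given `G z = y`). The glued measure lives on the graph of `G`, so the lift pushes
forward to `γ` again, and disintegrating the lift over its first marginal gives the encoder.
-/

open MeasureTheory ProbabilityTheory ENNReal Filter

/-- The Wasserstein "distance" between two measures w.r.t. a cost `d`,
defined as the infimum over couplings (probability measures on the product
with the prescribed marginals) of the transport cost, valued in `[0, ∞]`. -/
noncomputable def wasserstein {X : Type*} [MeasurableSpace X]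
    (d : X → X → ℝ) (P Q : Measure X) : ℝ≥0∞ :=
  ⨅ γ ∈ {γ : Measure (X × X) |
      IsProbabilityMeasure γ ∧ γ.map Prod.fst = P ∧ γ.map Prod.snd = Q},
    ∫⁻ p, ENNReal.ofReal (d p.1 p.2) ∂γ

section Couplings

variable {X Y Z : Type*} [MeasurableSpace X] [MeasurableSpace Y] [MeasurableSpace Z]

def couplings (P : Measure X) (Q : Measure Y) : Set (Measure (X × Y)) :=
  {γ | IsProbabilityMeasure γ ∧ γ.map Prod.fst = P ∧ γ.map Prod.snd = Q}

lemma map_prodMap_mem_couplings {P : Measure X} {ν : Measure Z} {G : Z → Y} (hG : Measurable G)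
    {η : Measure (X × Z)} (hη : η ∈ couplings P ν) :
    η.map (Prod.map id G) ∈ couplings P (ν.map G) := by
  obtain ⟨_, hfst, hsnd⟩ := hη
  have hm : Measurable (Prod.map (id : X → X) G) := measurable_id.prodMap hG
  refine ⟨Measure.isProbabilityMeasure_map hm.aemeasurable, ?_, ?_⟩
  · rw [Measure.map_map measurable_fst hm]
    exact hfst
  · rw [Measure.map_map measurable_snd hm, ← hsnd, Measure.map_map hG measurable_snd]
    rfl

lemma map_compProd_prodMkLeft_eq_snd_compProd (γ : Measure (X × Y)) [SFinite γ]
    (κ : Kernel Y Z) [IsSFiniteKernel κ] :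
    (γ ⊗ₘ κ.prodMkLeft X).map (fun p => (p.1.2, p.2)) = γ.snd ⊗ₘ κ := by
  have hm : Measurable fun p : (X × Y) × Z => (p.1.2, p.2) :=
    (measurable_snd.comp measurable_fst).prodMk measurable_snd
  ext s hs
  rw [Measure.map_apply hm hs, Measure.compProd_apply (hm hs), Measure.compProd_apply hs,
    Measure.snd, lintegral_map (f := fun y => κ y (Prod.mk y ⁻¹' s))
      (Kernel.measurable_kernel_prodMk_left hs) measurable_snd]
  rfl

lemma exists_map_prodMap_eq_of_mem_couplings [MeasurableEq Y] [StandardBorelSpace Z]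
    {P : Measure X} {ν : Measure Z} {G : Z → Y} (hG : Measurable G)
    {γ : Measure (X × Y)} (hγ : γ ∈ couplings P (ν.map G)) :
    ∃ η ∈ couplings P ν, η.map (Prod.map id G) = γ := by
  obtain ⟨_, hfst, hsnd⟩ := hγ
  have : IsProbabilityMeasure ν := by
    have : IsProbabilityMeasure (ν.map G) :=
      hsnd ▸ Measure.isProbabilityMeasure_map measurable_snd.aemeasurable
    exact Measure.isProbabilityMeasure_of_map G
  have : Nonempty Z := nonempty_of_isProbabilityMeasure ν
  set graph : Measure (Y × Z) := ν.map fun z => (G z, z)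
  have hgraph_snd : graph.snd = ν := (Measure.snd_map_prodMk hG).trans Measure.map_id
  have hγ_snd : γ.snd = graph.fst := hsnd.trans (Measure.fst_map_prodMk measurable_id).symm
  set κ := graph.condKernel
  -- `ξ` draws `(x, y)` from `γ`, then `z` from the law of `ν` conditioned on `G z = y`.
  set ξ := γ ⊗ₘ κ.prodMkLeft X
  have hξ_snd : ξ.map (fun p => (p.1.2, p.2)) = graph := by
    rw [map_compProd_prodMkLeft_eq_snd_compProd, hγ_snd, Measure.disintegrate]
  have hξ_graph : ∀ᵐ p ∂ξ, p.1.2 = G p.2 := by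
    have hmeas : MeasurableSet {q : Y × Z | q.1 = G q.2} :=
      measurableSet_eq_fun measurable_fst (hG.comp measurable_snd)
    have : ∀ᵐ q ∂graph, q.1 = G q.2 := (ae_map_iff (hG.prodMk measurable_id).aemeasurable hmeas).2 (by simp)
    rw [← hξ_snd] at this
    exact ae_of_ae_map (by fun_prop) this
  have hm : Measurable fun p : (X × Y) × Z => (p.1.1, p.2) := by fun_prop
  have hη_map : (ξ.map fun p => (p.1.1, p.2)).map (Prod.map id G) = γ := by
    rw [Measure.map_map (by fun_prop) hm]
    calc ξ.map (Prod.map id G ∘ fun p => (p.1.1, p.2)) = ξ.map Prod.fst :=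
          Measure.map_congr (hξ_graph.mono fun p hp => Prod.ext rfl hp.symm)
      _ = γ := Measure.fst_compProd γ _
  refine ⟨_, ⟨Measure.isProbabilityMeasure_map hm.aemeasurable, ?_, ?_⟩, hη_map⟩
  · rw [← hfst, ← hη_map, Measure.map_map measurable_fst (measurable_id.prodMap hG)]
    rfl
  · rw [← hgraph_snd, ← hξ_snd, Measure.snd, Measure.map_map measurable_snd hm,
      Measure.map_map measurable_snd (by fun_prop)]
    rfl

lemma image_map_prodMap_couplings [MeasurableEq Y] [StandardBorelSpace Z]
    (P : Measure X) (ν : Measure Z) {G : Z → Y} (hG : Measurable G) :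
    Measure.map (Prod.map id G) '' couplings P ν = couplings P (ν.map G) :=
  Set.Subset.antisymm (Set.image_subset_iff.2 fun _ => map_prodMap_mem_couplings hG)
    fun _ => exists_map_prodMap_eq_of_mem_couplings hG

lemma couplings_eq_image_compProd [StandardBorelSpace Z] (P : Measure X) [IsProbabilityMeasure P]
    (ν : Measure Z) :
    couplings P ν =
      (fun q => P ⊗ₘ q) '' {q : Kernel X Z | IsMarkovKernel q ∧ P.bind q = ν} := by
  ext η
  constructor
  · rintro ⟨_, hfst, hsnd⟩
    have : Nonempty Z := (nonempty_prod.1 (nonempty_of_isProbabilityMeasure η)).2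
    have hη : P ⊗ₘ η.condKernel = η := hfst ▸ η.disintegrate η.condKernel
    refine ⟨η.condKernel, ⟨inferInstance, ?_⟩, hη⟩
    rw [← Measure.snd_compProd, hη]
    exact hsnd
  · rintro ⟨q, ⟨_, hq⟩, rfl⟩
    exact ⟨inferInstance, Measure.fst_compProd P q, (Measure.snd_compProd P q).trans hq⟩

end Couplings

theorem wasserstein_deterministic_decoder_general
    {X Z : Type*} [MetricSpace X] [SecondCountableTopology X]
    [MeasurableSpace X] [BorelSpace X]
    [MeasurableSpace Z] [StandardBorelSpace Z]
    (G : Z → X) (hG : Measurable G)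
    (P : Measure X) [IsProbabilityMeasure P]
    (ν : Measure Z) :
    wasserstein dist P (ν.map G) =
      ⨅ q ∈ {q : Kernel X Z | IsMarkovKernel q ∧ P.bind (fun x => q x) = ν},
        ∫⁻ x, ∫⁻ z, ENNReal.ofReal (dist x (G z)) ∂(q x) ∂P := by
  have hcost : Measurable fun p : X × X => ENNReal.ofReal (dist p.1 p.2) := by fun_prop
  calc wasserstein dist P (ν.map G)
      = ⨅ γ ∈ couplings P (ν.map G), ∫⁻ p, ENNReal.ofReal (dist p.1 p.2) ∂γ := rfl
    _ = ⨅ η ∈ couplings P ν, ∫⁻ p, ENNReal.ofReal (dist p.1 (G p.2)) ∂η := by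
      rw [← image_map_prodMap_couplings P ν hG, iInf_image]
      simp_rw [lintegral_map hcost (measurable_id.prodMap hG)]
      rfl
    _ = _ := by
      rw [couplings_eq_image_compProd, iInf_image]
      refine iInf_congr fun q => iInf_congr fun ⟨_, _⟩ => ?_
      exact Measure.lintegral_compProd (by fun_prop)

/-- **Deterministic-decoder optimal transport factorization.**
For a Polish metric space `X`, a standard Borel latent space `Z`, a Borel
measurable decoder `G : Z → X`, a data distribution `P` and a latent prior `ν`,
the Wasserstein distance between `P` and the pushforward `G_*ν` equals the
infimum, over Markov kernels (encoders) `q` from `X` to `Z` whose `P`-mixture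
is `ν`, of the expected reconstruction cost `∫ ∫ d(x, G z) q(dz|x) P(dx)`. -/
theorem wasserstein_deterministic_decoder
    {X Z : Type*} [MetricSpace X] [CompleteSpace X] [SecondCountableTopology X]
    [MeasurableSpace X] [BorelSpace X]
    [MeasurableSpace Z] [StandardBorelSpace Z]
    (G : Z → X) (hG : Measurable G)
    (P : Measure X) [IsProbabilityMeasure P]
    (ν : Measure Z) [IsProbabilityMeasure ν] :
    wasserstein dist P (ν.map G) =
      ⨅ q ∈ {q : Kernel X Z | IsMarkovKernel q ∧ P.bind (fun x => q x) = ν},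
        ∫⁻ x, ∫⁻ z, ENNReal.ofReal (dist x (G z)) ∂(q x) ∂P :=
  wasserstein_deterministic_decoder_general G hG P ν
end

section
/- Let X be a standard Borel space, (Y, d) a compact metric space, ξ a probability measure on X, and P, Q Markov kernels from X to Y. For probability measures p, q on Y write W*_d(p, q) = sup { ∫ f dp − ∫ f dq : f : Y → ℝ is 1-Lipschitz with respect to d }. Then the map x ↦ W*_d(P(·|x), Q(·|x)) is measurable, and ∫_X W*_d(P(·|x), Q(·|x)) dξ(x) = sup over all jointly measurable functions Φ : X × Y → ℝ such that Φ(x, ·) is 1-Lipschitz with respect to d for every x ∈ X, of ∫_X ( ∫_Y Φ(x, y) P(dy | x) − ∫_Y Φ(x, y) Q(dy | x) ) dξ(x). -/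
/-!
The `1`-Lipschitz functions on a compact metric space `Y` form a separable subset of `C(Y, ℝ)`,
so a single sequence `vₙ` of them computes `W*_d(p, q) = ⨆ₙ (∫ vₙ dp - ∫ vₙ dq)` for all `p, q`.
Hence `x ↦ W*_d(P x, Q x)` is a countable supremum of measurable functions, and for `ε > 0` the
least `n = N x` that is `ε`-optimal at `x` depends measurably on `x`: the selector
`Φ (x, y) = v_{N x} y` is jointly measurable and `ε`-optimal everywhere. Every admissible
selector is pointwise below `W*_d`, which gives the other inequality.
-/

open MeasureTheory ProbabilityTheory Filter

/-- The dual (Kantorovich–Rubinstein) form of the Wasserstein distance: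
the supremum, over `1`-Lipschitz functions `f`, of `∫ f dp − ∫ f dq`. -/
noncomputable def wassersteinDual {Y : Type*} [MetricSpace Y] [MeasurableSpace Y]
    (p q : Measure Y) : ℝ :=
  sSup {r : ℝ | ∃ f : Y → ℝ,
    (∀ y₁ y₂, f y₁ - f y₂ ≤ dist y₁ y₂) ∧
    r = (∫ y, f y ∂p) - ∫ y, f y ∂q}

theorem lipschitzWith_one_iff_sub_le_dist {Y : Type*} [PseudoMetricSpace Y] {f : Y → ℝ} :
    LipschitzWith 1 f ↔ ∀ y₁ y₂, f y₁ - f y₂ ≤ dist y₁ y₂ := by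
  refine ⟨fun hf y₁ y₂ => ?_, fun h => .of_le_add_mul 1 fun y₁ y₂ => ?_⟩
  · have := hf.le_add_mul y₁ y₂
    simp only [NNReal.coe_one, one_mul] at this
    linarith
  · have := h y₁ y₂
    simp only [NNReal.coe_one, one_mul]
    linarith

theorem abs_integral_sub_integral_le {α : Type*} [MeasurableSpace α] {μ : Measure α}
    [IsProbabilityMeasure μ] {f g : α → ℝ} (hf : Integrable f μ) (hg : Integrable g μ) {δ : ℝ}
    (h : ∀ᵐ a ∂μ, |f a - g a| ≤ δ) : |∫ a, f a ∂μ - ∫ a, g a ∂μ| ≤ δ := by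
  rw [← integral_sub hf hg]
  simpa using norm_integral_le_of_norm_le_const (f := fun a => f a - g a) (C := δ)
    (h.mono fun a ha => by rwa [Real.norm_eq_abs])

theorem exists_measurable_nat_of_forall_exists {X : Type*} [MeasurableSpace X]
    {p : X → ℕ → Prop} (hp : ∀ n, MeasurableSet {x | p x n}) (hex : ∀ x, ∃ n, p x n) :
    ∃ N : X → ℕ, Measurable N ∧ ∀ x, p x (N x) := by
  classical
  exact ⟨fun x => Nat.find (hex x), measurable_find hex hp, fun x => Nat.find_spec (hex x)⟩

section CompactSpace

variable {Y : Type*} [MetricSpace Y] [CompactSpace Y]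

theorem exists_seq_lipschitzWith_one_dense :
    ∃ v : ℕ → Y → ℝ, (∀ n, LipschitzWith 1 (v n)) ∧
      ∀ f : Y → ℝ, LipschitzWith 1 f → ∀ δ > 0, ∃ n, ∀ y, |f y - v n y| ≤ δ := by
  let S : Set C(Y, ℝ) := {f | LipschitzWith 1 f}
  have : Nonempty S := ⟨⟨0, LipschitzWith.const' (0 : ℝ)⟩⟩
  obtain ⟨u, hu⟩ := TopologicalSpace.exists_dense_seq S
  refine ⟨fun n => u n, fun n => (u n).2, fun f hf δ hδ => ?_⟩
  obtain ⟨n, hn⟩ := Metric.denseRange_iff.1 hu ⟨⟨f, hf.continuous⟩, hf⟩ δ hδ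
  rw [Subtype.dist_eq] at hn
  exact ⟨n, fun y => (ContinuousMap.dist_apply_le_dist y).trans hn.le⟩

variable [MeasurableSpace Y] [BorelSpace Y]

theorem LipschitzWith.integrable {K : NNReal} {f : Y → ℝ} (hf : LipschitzWith K f)
    (p : Measure Y) [IsFiniteMeasure p] : Integrable f p :=
  hf.continuous.integrable_of_hasCompactSupport (.of_compactSpace f)

theorem abs_integral_sub_integral_le_two_mul_diam {f : Y → ℝ} (hf : LipschitzWith 1 f)
    (p q : Measure Y) [IsProbabilityMeasure p] [IsProbabilityMeasure q] :
    |∫ y, f y ∂p - ∫ y, f y ∂q| ≤ 2 * Metric.diam (Set.univ : Set Y) := by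
  obtain ⟨y₀⟩ := nonempty_of_isProbabilityMeasure p
  have near_value : ∀ (μ : Measure Y) [IsProbabilityMeasure μ],
      |∫ y, f y ∂μ - f y₀| ≤ Metric.diam (Set.univ : Set Y) := fun μ _ => by
    have abs_sub_le_diam (y : Y) : |f y - f y₀| ≤ Metric.diam (Set.univ : Set Y) := by
      rw [← Real.dist_eq]
      exact (by simpa using hf.dist_le_mul y y₀ : dist (f y) (f y₀) ≤ dist y y₀).trans
        (Metric.dist_le_diam_of_mem isCompact_univ.isBounded trivial trivial)
    simpa using abs_integral_sub_integral_le (hf.integrable μ) (integrable_const (f y₀))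
      (Eventually.of_forall abs_sub_le_diam)
  have := abs_sub_le (∫ y, f y ∂p) (f y₀) (∫ y, f y ∂q)
  rw [abs_sub_comm (f y₀)] at this
  linarith [near_value p, near_value q]

variable (p q : Measure Y) [IsProbabilityMeasure p] [IsProbabilityMeasure q]

theorem le_wassersteinDual {f : Y → ℝ} (hf : LipschitzWith 1 f) :
    ∫ y, f y ∂p - ∫ y, f y ∂q ≤ wassersteinDual p q := by
  refine le_csSup ⟨2 * Metric.diam (Set.univ : Set Y), ?_⟩
    ⟨f, lipschitzWith_one_iff_sub_le_dist.1 hf, rfl⟩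
  rintro _ ⟨g, hg, rfl⟩
  exact (le_abs_self _).trans
    (abs_integral_sub_integral_le_two_mul_diam (lipschitzWith_one_iff_sub_le_dist.2 hg) p q)

theorem wassersteinDual_nonneg : 0 ≤ wassersteinDual p q := by
  simpa using le_wassersteinDual p q (LipschitzWith.const' (0 : ℝ))

theorem wassersteinDual_le_two_mul_diam :
    wassersteinDual p q ≤ 2 * Metric.diam (Set.univ : Set Y) := by
  refine csSup_le ⟨_, 0, fun _ _ => by simp, rfl⟩ ?_
  rintro _ ⟨f, hf, rfl⟩
  exact (le_abs_self _).trans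
    (abs_integral_sub_integral_le_two_mul_diam (lipschitzWith_one_iff_sub_le_dist.2 hf) p q)

theorem exists_seq_wassersteinDual_eq_iSup :
    ∃ v : ℕ → Y → ℝ, (∀ n, LipschitzWith 1 (v n)) ∧
      ∀ (p q : Measure Y) [IsProbabilityMeasure p] [IsProbabilityMeasure q],
        wassersteinDual p q = ⨆ n, (∫ y, v n y ∂p - ∫ y, v n y ∂q) := by
  obtain ⟨v, hv_lip, hv_dense⟩ := exists_seq_lipschitzWith_one_dense (Y := Y)
  refine ⟨v, hv_lip, fun p q _ _ =>
    le_antisymm ?_ (ciSup_le fun n => le_wassersteinDual p q (hv_lip n))⟩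
  have hbdd : BddAbove (Set.range fun n => ∫ y, v n y ∂p - ∫ y, v n y ∂q) :=
    ⟨wassersteinDual p q, by rintro _ ⟨n, rfl⟩; exact le_wassersteinDual p q (hv_lip n)⟩
  refine csSup_le ⟨_, 0, fun _ _ => by simp, rfl⟩ ?_
  rintro _ ⟨f, hf, rfl⟩
  rw [← lipschitzWith_one_iff_sub_le_dist] at hf
  refine le_of_forall_pos_le_add fun ε hε => ?_
  obtain ⟨n, hn⟩ := hv_dense f hf (ε / 2) (half_pos hε)
  have close : ∀ (μ : Measure Y) [IsProbabilityMeasure μ],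
      |∫ y, f y ∂μ - ∫ y, v n y ∂μ| ≤ ε / 2 := fun μ _ =>
    abs_integral_sub_integral_le (hf.integrable μ) ((hv_lip n).integrable μ)
      (Eventually.of_forall hn)
  have := le_ciSup hbdd n
  linarith [abs_le.1 (close p), abs_le.1 (close q)]

end CompactSpace

section Kernel

variable {X Y : Type*} [MeasurableSpace X] [MeasurableSpace Y]

theorem measurable_integral_sub_integral_kernel (P Q : Kernel X Y) [IsSFiniteKernel P]
    [IsSFiniteKernel Q] {Φ : X × Y → ℝ} (hΦ : Measurable Φ) :
    Measurable fun x => ∫ y, Φ (x, y) ∂P x - ∫ y, Φ (x, y) ∂Q x :=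
  hΦ.stronglyMeasurable.integral_kernel_prod_right'.measurable.sub
    hΦ.stronglyMeasurable.integral_kernel_prod_right'.measurable

variable [MetricSpace Y] [CompactSpace Y] [BorelSpace Y]
  (P Q : Kernel X Y) [IsMarkovKernel P] [IsMarkovKernel Q]

theorem measurable_wassersteinDual_kernel : Measurable fun x => wassersteinDual (P x) (Q x) := by
  obtain ⟨v, hv_lip, hv⟩ := exists_seq_wassersteinDual_eq_iSup (Y := Y)
  simp_rw [hv]
  exact .iSup fun n => measurable_integral_sub_integral_kernel P Q
    ((hv_lip n).continuous.measurable.comp measurable_snd)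

theorem integrable_wassersteinDual_kernel (ξ : Measure X) [IsFiniteMeasure ξ] :
    Integrable (fun x => wassersteinDual (P x) (Q x)) ξ :=
  .of_bound (measurable_wassersteinDual_kernel P Q).aestronglyMeasurable _
    (Eventually.of_forall fun x => by
      rw [Real.norm_of_nonneg (wassersteinDual_nonneg _ _)]
      exact wassersteinDual_le_two_mul_diam _ _)

theorem integrable_integral_sub_integral_kernel (ξ : Measure X) [IsFiniteMeasure ξ]
    {Φ : X × Y → ℝ} (hΦ : Measurable Φ) (hΦ_lip : ∀ x, LipschitzWith 1 fun y => Φ (x, y)) :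
    Integrable (fun x => ∫ y, Φ (x, y) ∂P x - ∫ y, Φ (x, y) ∂Q x) ξ :=
  .of_bound (measurable_integral_sub_integral_kernel P Q hΦ).aestronglyMeasurable _
    (Eventually.of_forall fun x => abs_integral_sub_integral_le_two_mul_diam (hΦ_lip x) _ _)

theorem exists_lipschitz_selector_wassersteinDual_sub_lt {ε : ℝ} (hε : 0 < ε) :
    ∃ Φ : X × Y → ℝ, Measurable Φ ∧ (∀ x, LipschitzWith 1 fun y => Φ (x, y)) ∧
      ∀ x, wassersteinDual (P x) (Q x) - ε < ∫ y, Φ (x, y) ∂P x - ∫ y, Φ (x, y) ∂Q x := by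
  obtain ⟨v, hv_lip, hv⟩ := exists_seq_wassersteinDual_eq_iSup (Y := Y)
  have hv_meas n : Measurable (v n) := (hv_lip n).continuous.measurable
  obtain ⟨N, hN, hN_gt⟩ := exists_measurable_nat_of_forall_exists
    (p := fun x n => wassersteinDual (P x) (Q x) - ε < ∫ y, v n y ∂P x - ∫ y, v n y ∂Q x)
    (fun n => measurableSet_lt ((measurable_wassersteinDual_kernel P Q).sub_const ε)
      (measurable_integral_sub_integral_kernel P Q ((hv_meas n).comp measurable_snd)))
    (fun x => exists_lt_of_lt_ciSup (by rw [← hv]; linarith))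
  refine ⟨fun z => v (N z.1) z.2, ?_, fun x => hv_lip (N x), hN_gt⟩
  exact (measurable_from_prod_countable_left (f := fun w : Y × ℕ => v w.2 w.1) hv_meas).comp
    (measurable_snd.prodMk (hN.comp measurable_fst))

end Kernel

theorem lintegral_wassersteinDual_eq_iSup_general
    {X Y : Type*} [MeasurableSpace X]
    [MetricSpace Y] [CompactSpace Y] [MeasurableSpace Y] [BorelSpace Y]
    (ξ : Measure X) [IsProbabilityMeasure ξ]
    (P Q : Kernel X Y) [IsMarkovKernel P] [IsMarkovKernel Q] :
    Measurable (fun x => wassersteinDual (P x) (Q x)) ∧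
    ∫ x, wassersteinDual (P x) (Q x) ∂ξ =
      sSup {r : ℝ | ∃ Φ : X × Y → ℝ, Measurable Φ ∧
        (∀ x, ∀ y₁ y₂, Φ (x, y₁) - Φ (x, y₂) ≤ dist y₁ y₂) ∧
        r = ∫ x, ((∫ y, Φ (x, y) ∂(P x)) - ∫ y, Φ (x, y) ∂(Q x)) ∂ξ} := by
  have hW_int := integrable_wassersteinDual_kernel P Q ξ
  refine ⟨measurable_wassersteinDual_kernel P Q,
    (csSup_eq_of_forall_le_of_forall_lt_exists_gt ?_ ?_ ?_).symm⟩
  · exact ⟨0, fun _ => 0, measurable_const, fun _ _ _ => by simp, by simp⟩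
  · rintro _ ⟨Φ, hΦ, hΦ_lip, rfl⟩
    simp_rw [← lipschitzWith_one_iff_sub_le_dist] at hΦ_lip
    exact integral_mono (integrable_integral_sub_integral_kernel P Q ξ hΦ hΦ_lip) hW_int
      fun x => le_wassersteinDual _ _ (hΦ_lip x)
  · intro w hw
    obtain ⟨Φ, hΦ, hΦ_lip, hΦ_gt⟩ :=
      exists_lipschitz_selector_wassersteinDual_sub_lt P Q (half_pos (sub_pos.2 hw))
    refine ⟨_, ⟨Φ, hΦ, fun x => lipschitzWith_one_iff_sub_le_dist.1 (hΦ_lip x), rfl⟩, ?_⟩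
    set ε := (∫ x, wassersteinDual (P x) (Q x) ∂ξ - w) / 2
    calc w < ∫ x, (wassersteinDual (P x) (Q x) - ε) ∂ξ := by
          rw [integral_sub hW_int (integrable_const ε), integral_const]
          simp only [probReal_univ, smul_eq_mul, one_mul, ε]
          linarith
      _ ≤ _ := integral_mono (hW_int.sub (integrable_const ε))
          (integrable_integral_sub_integral_kernel P Q ξ hΦ hΦ_lip) fun x => (hΦ_gt x).le

/-- **Expected conditional dual Wasserstein distance as a single supremum.**
For a standard Borel input space `X`, a compact metric output space `Y`,
a probability measure `ξ` on `X` and Markov kernels `P, Q` from `X` to `Y`,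
the map `x ↦ W*_d(P(·|x), Q(·|x))` is measurable and its `ξ`-expectation
equals the supremum, over jointly measurable `Φ : X × Y → ℝ` whose sections
`Φ(x, ·)` are all `1`-Lipschitz, of
`∫ (∫ Φ(x,·) dP(·|x) − ∫ Φ(x,·) dQ(·|x)) dξ`. -/
theorem lintegral_wassersteinDual_eq_iSup
    {X Y : Type*} [MeasurableSpace X] [StandardBorelSpace X]
    [MetricSpace Y] [CompactSpace Y] [MeasurableSpace Y] [BorelSpace Y]
    (ξ : Measure X) [IsProbabilityMeasure ξ]
    (P Q : Kernel X Y) [IsMarkovKernel P] [IsMarkovKernel Q] :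
    Measurable (fun x => wassersteinDual (P x) (Q x)) ∧
    ∫ x, wassersteinDual (P x) (Q x) ∂ξ =
      sSup {r : ℝ | ∃ Φ : X × Y → ℝ, Measurable Φ ∧
        (∀ x, ∀ y₁ y₂, Φ (x, y₁) - Φ (x, y₂) ≤ dist y₁ y₂) ∧
        r = ∫ x, ((∫ y, Φ (x, y) ∂(P x)) - ∫ y, Φ (x, y) ∂(Q x)) ∂ξ} :=
  lintegral_wassersteinDual_eq_iSup_general ξ P Q
end
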